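/- If ã is obtained from a probability vector a ∈ ℝ^n by keeping the first M−1 coordinates and aggregating the tail mass into coordinate M, and C̃_k consists of the first M columns of C_k, then the total variation distance between C̃_k ã and C_k a is at most 2k·ã_M/M. -/
import Mathlib


/-- The entries of C_k with 1-based column index j : [C_k]_{i,j} = 1/j for
1 ≤ row ≤ min(j,k) and [C_k]_{k+1,j} = (j−k)/j for j ≥ k (rows are 0-based
via Fin (k+1), columns 1-based via ℕ). -/
noncomputable def CmatEntry (k : ℕ) (i : Fin (k + 1)) (j : ℕ) : ℝ :=
  if (i : ℕ) < k then
    (if (i : ℕ) + 1 ≤ j then 1 / (j : ℝ) else 0)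
  else
    (if k ≤ j then ((j : ℝ) - k) / j else 0)

lemma row_bound (k M j : ℕ) (hk : 1 ≤ k) (hkM : k ≤ M) (hMj : M ≤ j) :
    ∑ i : Fin (k + 1), |CmatEntry k i M - CmatEntry k i j| ≤ 2 * k / M := by
  have hM0 : (0 : ℝ) < M := by
    have : 1 ≤ M := le_trans hk hkM
    exact_mod_cast Nat.lt_of_lt_of_le Nat.zero_lt_one this
  have hj0 : (0 : ℝ) < j := lt_of_lt_of_le hM0 (by exact_mod_cast hMj)
  have hMj' : (M : ℝ) ≤ j := by exact_mod_cast hMj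
  rw [Fin.sum_univ_castSucc]
  have h1 : ∀ i : Fin k, |CmatEntry k i.castSucc M - CmatEntry k i.castSucc j| ≤ 1 / M := by
    intro i
    have hi : (i.castSucc : ℕ) < k := i.isLt
    have hiM : (i.castSucc : ℕ) + 1 ≤ M := le_trans hi hkM
    have hij : (i.castSucc : ℕ) + 1 ≤ j := le_trans hiM hMj
    simp only [CmatEntry, if_pos hi, if_pos hiM, if_pos hij]
    rw [abs_of_nonneg (by
      have : 1 / (j : ℝ) ≤ 1 / M := one_div_le_one_div_of_le hM0 hMj'
      linarith)]
    have : 0 ≤ 1 / (j : ℝ) := by positivity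
    linarith
  have h2 : |CmatEntry k (Fin.last k) M - CmatEntry k (Fin.last k) j| ≤ k / M := by
    simp only [CmatEntry, Fin.val_last, if_neg (lt_irrefl k), if_pos hkM,
      if_pos (le_trans hkM hMj)]
    have e1 : ((M : ℝ) - k) / M = 1 - k / M := by field_simp
    have e2 : ((j : ℝ) - k) / j = 1 - k / j := by field_simp
    rw [e1, e2]
    have hkj : (k : ℝ) / j ≤ k / M := by
      apply div_le_div_of_nonneg_left (by positivity) hM0 hMj'
    rw [abs_of_nonpos (by linarith)]
    have : 0 ≤ (k : ℝ) / j := by positivity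
    linarith
  calc (∑ i : Fin k, |CmatEntry k i.castSucc M - CmatEntry k i.castSucc j|)
        + |CmatEntry k (Fin.last k) M - CmatEntry k (Fin.last k) j|
      ≤ (∑ _i : Fin k, 1 / (M : ℝ)) + k / M := by
        exact add_le_add (Finset.sum_le_sum fun i _ => h1 i) h2
    _ = k * (1 / M) + k / M := by simp
    _ ≤ 2 * k / M := le_of_eq (by ring)

/-- Truncating a probability vector a of length n to length M by aggregating the
tail mass into coordinate M changes C_k a by at most 2k·ã_M/M in total variation. -/
theorem truncation_total_variation_bound
    (n k M : ℕ) (hk : 1 ≤ k) (hkM : k ≤ M) (hMn : M ≤ n)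
    (a : ℕ → ℝ) (ha0 : ∀ j ∈ Finset.Icc 1 n, 0 ≤ a j)
    (ha1 : ∑ j ∈ Finset.Icc 1 n, a j = 1)
    (atil : ℕ → ℝ)
    (hatil : ∀ j, j < M → atil j = a j)
    (hatilM : atil M = ∑ j ∈ Finset.Icc M n, a j) :
    ∑ i : Fin (k + 1),
        |(∑ j ∈ Finset.Icc 1 M, CmatEntry k i j * atil j) -
          (∑ j ∈ Finset.Icc 1 n, CmatEntry k i j * a j)|
      ≤ 2 * k * atil M / M := by
  have hM1 : 1 ≤ M := le_trans hk hkM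
  have ha0' : ∀ j ∈ Finset.Icc M n, 0 ≤ a j := by
    intro j hj
    rw [Finset.mem_Icc] at hj
    exact ha0 j (Finset.mem_Icc.mpr ⟨le_trans hM1 hj.1, hj.2⟩)
  have key : ∀ i : Fin (k + 1),
      (∑ j ∈ Finset.Icc 1 M, CmatEntry k i j * atil j) -
        (∑ j ∈ Finset.Icc 1 n, CmatEntry k i j * a j)
      = ∑ j ∈ Finset.Icc M n, (CmatEntry k i M - CmatEntry k i j) * a j := by
    intro i
    have e1 : ∑ j ∈ Finset.Icc 1 M, CmatEntry k i j * atil j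
        = (∑ j ∈ Finset.Ico 1 M, CmatEntry k i j * a j) + CmatEntry k i M * atil M := by
      rw [← Finset.Ico_add_one_right_eq_Icc, Finset.sum_Ico_succ_top hM1]
      congr 1
      apply Finset.sum_congr rfl
      intro j hj
      rw [hatil j (Finset.mem_Ico.mp hj).2]
    have e2 : ∑ j ∈ Finset.Icc 1 n, CmatEntry k i j * a j
        = (∑ j ∈ Finset.Ico 1 M, CmatEntry k i j * a j)
          + ∑ j ∈ Finset.Icc M n, CmatEntry k i j * a j := by
      rw [← Finset.Ico_add_one_right_eq_Icc, ← Finset.Ico_add_one_right_eq_Icc (a := M),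
        ← Finset.sum_Ico_consecutive _ hM1 (by omega : M ≤ n + 1)]
    rw [e1, e2, hatilM, Finset.mul_sum]
    simp only [sub_mul]
    rw [Finset.sum_sub_distrib]
    ring
  calc ∑ i : Fin (k + 1),
        |(∑ j ∈ Finset.Icc 1 M, CmatEntry k i j * atil j) -
          (∑ j ∈ Finset.Icc 1 n, CmatEntry k i j * a j)|
      = ∑ i : Fin (k + 1), |∑ j ∈ Finset.Icc M n, (CmatEntry k i M - CmatEntry k i j) * a j| := by
        simp only [key]
    _ ≤ ∑ i : Fin (k + 1), ∑ j ∈ Finset.Icc M n, |CmatEntry k i M - CmatEntry k i j| * a j := by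
        apply Finset.sum_le_sum
        intro i _
        refine le_trans (Finset.abs_sum_le_sum_abs _ _) ?_
        apply Finset.sum_le_sum
        intro j hj
        rw [abs_mul, abs_of_nonneg (ha0' j hj)]
    _ = ∑ j ∈ Finset.Icc M n, (∑ i : Fin (k + 1), |CmatEntry k i M - CmatEntry k i j|) * a j := by
        rw [Finset.sum_comm]
        simp [Finset.sum_mul]
    _ ≤ ∑ j ∈ Finset.Icc M n, (2 * k / M) * a j := by
        apply Finset.sum_le_sum
        intro j hj
        have := row_bound k M j hk hkM (Finset.mem_Icc.mp hj).1
        exact mul_le_mul_of_nonneg_right this (ha0' j hj)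
    _ = 2 * k * atil M / M := by
        rw [← Finset.mul_sum, ← hatilM]
        ring
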